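/- arXiv:1902.09620 — 2 statements merged into one kernel-verified Lean document; each statement's English description precedes it below -/
import Mathlib

section
/- Let F be a field with char(F) ≠ 2 and G a group with involution * extended to FG. If FG is normal, then every symmetric group element is central: G⁺ = {g ∈ G : g* = g} ⊆ ζ(G). In particular gg* = g*g is central for every g ∈ G. -/
/-!
Polarizing normality, `(α + β)(α + β)* = (α + β)*(α + β)`, gives `αβ* + βα* = α*β + β*α`.
For a symmetric `g` and any `h ∈ G` this reads `g h* + h g = g h + h* g` in `FG`.
As `char F ≠ 2`, two such sums of two group elements agree only if the pairs of elements
agree, so `h* = h` or `hg = gh`.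
If `h* = h`, apply the same dichotomy to `gh`, whose adjoint is `hg`: both alternatives
force `hg = gh`.
-/

/-- The F-linear extension of a group involution `st` to the group algebra. -/
noncomputable def invMap {F G : Type*} [Field F] [Group G] (st : G → G) :
    MonoidAlgebra F G → MonoidAlgebra F G :=
  fun α => MonoidAlgebra.mapDomain st α

open MonoidAlgebra

section NormalGroupAlgebra

variable {F G : Type*} [Field F] [Group G] {st : G → G}

lemma invMap_single (g : G) (r : F) : invMap st (single g r) = single (st g) r :=
  mapDomain_single

lemma invMap_add (α β : MonoidAlgebra F G) :
    invMap st (α + β) = invMap st α + invMap st β :=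
  mapDomain_add st α β

lemma mul_invMap_add_mul_invMap_of_normal
    (hnormal : ∀ α : MonoidAlgebra F G, α * invMap st α = invMap st α * α)
    (α β : MonoidAlgebra F G) :
    α * invMap st β + β * invMap st α = invMap st α * β + invMap st β * α := by
  have hsum := hnormal (α + β)
  rw [invMap_add, mul_add, add_mul, add_mul, add_mul, mul_add, mul_add, hnormal α, hnormal β]
    at hsum
  rw [add_assoc, add_assoc, add_right_inj, ← add_assoc, ← add_assoc, add_left_inj] at hsum
  rwa [add_comm] at hsum

lemma mul_st_eq_st_mul_of_normal
    (hnormal : ∀ α : MonoidAlgebra F G, α * invMap st α = invMap st α * α)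
    (g : G) : g * st g = st g * g := by
  have hg := hnormal (single g 1)
  rw [invMap_single, single_mul_single, single_mul_single, one_mul] at hg
  exact (single_left_inj one_ne_zero).mp hg

lemma st_eq_or_commute_of_normal
    (hnormal : ∀ α : MonoidAlgebra F G, α * invMap st α = invMap st α * α)
    (h2 : (2 : F) ≠ 0) {g : G} (hg : st g = g) (h : G) :
    st h = h ∨ h * g = g * h := by
  have hpol := mul_invMap_add_mul_invMap_of_normal hnormal (single g (1 : F)) (single h 1)
  rw [invMap_single, invMap_single, hg] at hpol
  simp only [single_mul_single, one_mul] at hpol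
  rcases (single_add_single_inj one_ne_zero one_ne_zero).mp hpol with
    ⟨hst, -⟩ | ⟨-, -, hcomm⟩ | ⟨htwo, -⟩
  · exact .inl (mul_left_cancel hst)
  · exact .inr hcomm
  · exact absurd (one_add_one_eq_two.symm.trans htwo) h2

lemma mem_center_of_st_eq
    (hnormal : ∀ α : MonoidAlgebra F G, α * invMap st α = invMap st α * α)
    (h2 : (2 : F) ≠ 0) (hanti : ∀ g h : G, st (g * h) = st h * st g)
    {g : G} (hg : st g = g) : g ∈ Subgroup.center G := by
  rw [Subgroup.mem_center_iff]
  intro h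
  rcases st_eq_or_commute_of_normal hnormal h2 hg h with hh | hcomm
  · rcases st_eq_or_commute_of_normal hnormal h2 hg (g * h) with hgh | hgh
    · rwa [hanti, hh, hg] at hgh
    · rw [mul_assoc] at hgh
      exact mul_left_cancel hgh
  · exact hcomm

end NormalGroupAlgebra

theorem stmt_2 {F G : Type*} [Field F] [Group G] (h2 : (2 : F) ≠ 0)
    (st : G → G) (hanti : ∀ g h : G, st (g * h) = st h * st g)
    (hinvol : ∀ g : G, st (st g) = g)
    (hnormal : ∀ α : MonoidAlgebra F G, α * invMap st α = invMap st α * α) :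
    (∀ g : G, st g = g → g ∈ Subgroup.center G) ∧
      (∀ g : G, g * st g = st g * g ∧ g * st g ∈ Subgroup.center G) := by
  refine ⟨fun g => mem_center_of_st_eq hnormal h2 hanti,
    fun g => ⟨mul_st_eq_st_mul_of_normal hnormal g, mem_center_of_st_eq hnormal h2 hanti ?_⟩⟩
  rw [hanti, hinvol]
end

section
/- Let F be a field with char(F) ≠ 2, G a group with non-trivial orientation σ and involution *, and suppose FG is normal with respect to the oriented involution ⊛. If g, h ∈ G do not commute and σ(h) = 1, then g²h = hg²; if g, h do not commute and σ(h) = −1, then g²h = (g²h)*. -/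
/-!
Polarizing normality gives `x y⊛ + y x⊛ = x⊛ y + y⊛ x`, and comparing this identity for the
pairs `(a, a k)` and `(a, k)` gives `a² m + m a⊛ a = a m a + a m a⊛` with `m = k⊛`. For group
elements `a = x`, `m = y` both sides are sums of two group elements with coefficients `1` and
`σ(x) = ±1`. When `x, y` do not commute, `x² y ≠ x y x`, so as `char F ≠ 2` the only way the two
sides can agree is `x y = y x*` if `σ(x) = 1`, and `x* = x`, `x² y = y x²` if `σ(x) = -1`.
Both claims follow by applying this dichotomy to the pairs `(h, g)`, `(h, g⁻¹)` and `(g, h)`.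
-/

/-- The oriented involution on the group algebra: `(Σ α_g g)⊛ = Σ α_g σ(g) g*`. -/
noncomputable def oinvMap {F G : Type*} [Field F] [Group G] (st : G → G) (σ : G → F) :
    MonoidAlgebra F G → MonoidAlgebra F G :=
  fun α => MonoidAlgebra.ofCoeff (Finsupp.sum α.coeff fun g c => Finsupp.single (st g) (σ g * c))

theorem mul_self_mul_add_mul_mul_eq_of_normal {R : Type*} [Ring R] {s : R → R}
    (hs_add : ∀ x y, s (x + y) = s x + s y) (hs_mul : ∀ x y, s (x * y) = s y * s x)
    (hn : ∀ x, x * s x = s x * x) (a k : R) :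
    a * a * s k + s k * s a * a = a * s k * a + a * s k * s a := by
  have polarized : ∀ x y, x * s y + y * s x = s x * y + s y * x := fun x y =>
    calc x * s y + y * s x = (x + y) * (s x + s y) - x * s x - y * s y := by noncomm_ring
      _ = (s x + s y) * (x + y) - s x * x - s y * y := by rw [← hs_add, hn, hn x, hn y]
      _ = s x * y + s y * x := by noncomm_ring
  have h₁ := polarized a (a * k)
  have h₂ := polarized a k
  rw [hs_mul] at h₁
  rw [← sub_eq_zero]
  calc a * a * s k + s k * s a * a - (a * s k * a + a * s k * s a)
      = a * (a * s k + k * s a - (s a * k + s k * a))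
          - (a * (s k * s a) + a * k * s a - (s a * (a * k) + s k * s a * a))
          + (a * s a - s a * a) * k := by noncomm_ring
    _ = 0 := by rw [h₁, h₂, hn, sub_self, sub_self, sub_self]; simp

section GroupAlgebra

variable {F G : Type*} [Field F] [Group G] {st : G → G} {σ : G → F}

theorem oinvMap_single (g : G) (c : F) :
    oinvMap st σ (MonoidAlgebra.single g c) = MonoidAlgebra.single (st g) (σ g * c) := by
  rw [oinvMap, MonoidAlgebra.coeff_single, Finsupp.sum_single_index (by simp)]
  rfl

theorem oinvMap_zero : oinvMap st σ (0 : MonoidAlgebra F G) = 0 := by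
  simp [oinvMap]

theorem oinvMap_add (α β : MonoidAlgebra F G) :
    oinvMap st σ (α + β) = oinvMap st σ α + oinvMap st σ β := by
  rw [oinvMap, MonoidAlgebra.coeff_add, Finsupp.sum_add_index' (by simp)
    (fun _ _ _ => by rw [mul_add, Finsupp.single_add])]
  rfl

theorem oinvMap_mul (hanti : ∀ g h : G, st (g * h) = st h * st g)
    (hhom : ∀ g h : G, σ (g * h) = σ g * σ h) (α β : MonoidAlgebra F G) :
    oinvMap st σ (α * β) = oinvMap st σ β * oinvMap st σ α := by
  induction α using MonoidAlgebra.induction_linear with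
  | zero => rw [zero_mul, oinvMap_zero, mul_zero]
  | add α₁ α₂ h₁ h₂ => rw [add_mul, oinvMap_add, oinvMap_add, h₁, h₂, mul_add]
  | single g c =>
    induction β using MonoidAlgebra.induction_linear with
    | zero => rw [mul_zero, oinvMap_zero, zero_mul]
    | add β₁ β₂ h₁ h₂ => rw [mul_add, oinvMap_add, oinvMap_add, h₁, h₂, add_mul]
    | single h d =>
      simp only [MonoidAlgebra.single_mul_single, oinvMap_single, hanti, hhom]
      congr 1
      ring

theorem single_mul_mul_add_single_eq_of_normal (hanti : ∀ g h : G, st (g * h) = st h * st g)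
    (hinvol : ∀ g : G, st (st g) = g) (hhom : ∀ g h : G, σ (g * h) = σ g * σ h)
    (hval : ∀ g : G, σ g = 1 ∨ σ g = -1)
    (hnormal : ∀ α : MonoidAlgebra F G, α * oinvMap st σ α = oinvMap st σ α * α) (x y : G) :
    (MonoidAlgebra.single (x * x * y) 1 + MonoidAlgebra.single (y * st x * x) (σ x)
      : MonoidAlgebra F G)
      = MonoidAlgebra.single (x * y * x) 1 + MonoidAlgebra.single (x * y * st x) (σ x) := by
  have hy : oinvMap st σ (MonoidAlgebra.single (st y) (σ (st y))) = MonoidAlgebra.single y 1 := by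
    rw [oinvMap_single, hinvol]
    rcases hval (st y) with h | h <;> rw [h] <;> norm_num
  have := mul_self_mul_add_mul_mul_eq_of_normal oinvMap_add (oinvMap_mul hanti hhom) hnormal
    (MonoidAlgebra.single x 1) (MonoidAlgebra.single (st y) (σ (st y)))
  simpa only [hy, oinvMap_single, MonoidAlgebra.single_mul_single, mul_one, one_mul] using this

theorem dichotomy_of_normal_of_mul_ne_mul (h2 : (2 : F) ≠ 0)
    (hanti : ∀ g h : G, st (g * h) = st h * st g) (hinvol : ∀ g : G, st (st g) = g) (hhom : ∀ g h : G, σ (g * h) = σ g * σ h)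
    (hval : ∀ g : G, σ g = 1 ∨ σ g = -1)
    (hnormal : ∀ α : MonoidAlgebra F G, α * oinvMap st σ α = oinvMap st σ α * α)
    {x y : G} (hne : x * y ≠ y * x) :
    (σ x = 1 → x * y = y * st x) ∧ (σ x = -1 → st x = x ∧ x * x * y = y * (x * x)) := by
  have rel := single_mul_mul_add_single_eq_of_normal hanti hinvol hhom hval hnormal x y
  have hxxy : x * x * y ≠ x * y * x := by
    rw [mul_assoc, mul_assoc]
    exact fun h => hne (mul_left_cancel h)
  refine ⟨fun hσ => ?_, fun hσ => ?_⟩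
  · rw [hσ, MonoidAlgebra.single_add_single_inj one_ne_zero one_ne_zero] at rel
    rcases rel with ⟨h, -⟩ | ⟨-, h, -⟩ | ⟨h, -⟩
    · exact absurd h hxxy
    · rw [mul_assoc, mul_assoc] at h
      exact mul_left_cancel h
    · exact absurd (by linear_combination h) h2
  · rw [hσ, MonoidAlgebra.single_add_single_inj one_ne_zero (neg_ne_zero.2 one_ne_zero)] at rel
    rcases rel with ⟨h, -⟩ | ⟨h, -⟩ | ⟨-, hl, hr⟩
    · exact absurd h hxxy
    · exact absurd (by linear_combination h) h2
    · have hst : st x = x := (mul_left_cancel hr).symm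
      exact ⟨hst, by rw [hl, hst, mul_assoc]⟩

end GroupAlgebra

theorem stmt_11_general {F G : Type*} [Field F] [Group G] (h2 : (2 : F) ≠ 0)
    (st : G → G) (hanti : ∀ g h : G, st (g * h) = st h * st g)
    (hinvol : ∀ g : G, st (st g) = g)
    (σ : G → F) (hhom : ∀ g h : G, σ (g * h) = σ g * σ h)
    (hval : ∀ g : G, σ g = 1 ∨ σ g = -1)
    (hnormal : ∀ α : MonoidAlgebra F G, α * oinvMap st σ α = oinvMap st σ α * α) :
    ∀ g h : G, g * h ≠ h * g →
      (σ h = 1 → g ^ 2 * h = h * g ^ 2) ∧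
      (σ h = -1 → g ^ 2 * h = st (g ^ 2 * h)) := by
  intro g h hne
  have dich := fun {x y : G} (hxy : x * y ≠ y * x) =>
    dichotomy_of_normal_of_mul_ne_mul h2 hanti hinvol hhom hval hnormal hxy
  have hne' : h * g ≠ g * h := hne.symm
  have hne_inv : h * g⁻¹ ≠ g⁻¹ * h := fun e => hne' (Commute.inv_right_iff.mp e).eq
  refine ⟨fun hσ => ?_, fun hσ => ?_⟩
  · have hg := (dich hne').1 hσ
    have hg_inv := (dich hne_inv).1 hσ
    calc g ^ 2 * h = g * (g * (h * g⁻¹)) * g := by rw [sq]; group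
      _ = h * g ^ 2 := by rw [hg_inv, mul_inv_cancel_left, ← hg, mul_assoc, sq]
  · rw [sq, hanti, hanti, ((dich hne').2 hσ).1]
    rcases hval g with hσg | hσg
    · have hst : st g = h⁻¹ * (g * h) := by rw [(dich hne).1 hσg, inv_mul_cancel_left]
      rw [hst]
      group
    · obtain ⟨hst, hsq⟩ := (dich hne).2 hσg
      rw [hst, hsq]

theorem stmt_11 {F G : Type*} [Field F] [Group G] (h2 : (2 : F) ≠ 0)
    (st : G → G) (hanti : ∀ g h : G, st (g * h) = st h * st g)
    (hinvol : ∀ g : G, st (st g) = g)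
    (σ : G → F) (hhom : ∀ g h : G, σ (g * h) = σ g * σ h)
    (hval : ∀ g : G, σ g = 1 ∨ σ g = -1)
    (hnt : ∃ g : G, σ g = -1)
    (hker : ∀ g : G, σ (g * st g) = 1)
    (hnormal : ∀ α : MonoidAlgebra F G, α * oinvMap st σ α = oinvMap st σ α * α) :
    ∀ g h : G, g * h ≠ h * g →
      (σ h = 1 → g ^ 2 * h = h * g ^ 2) ∧
      (σ h = -1 → g ^ 2 * h = st (g ^ 2 * h)) :=
  stmt_11_general h2 st hanti hinvol σ hhom hval hnormal
end
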